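/- For every p ∈ (1, ∞], there exist completely positive trace-preserving super-operators Φ₀, Φ₁ such that ‖Φ₀ − Φ₁‖^H_p < ‖Φ₀ − Φ₁‖_p. Concretely, with F = G = C², Φ₀ = identity, and Φ₁(X) = (tr X / 2)·I, the super-operator Φ = Φ₀ − Φ₁ satisfies ‖Φ‖^H_{1→p} = 2^{1/p}/2 < 1 = ‖Φ‖_{1→p}. -/

import Mathlib

open scoped ENNReal
open Matrix
open scoped ComplexOrder

noncomputable section

namespace SchattenNotes

/-- The vector of singular values of a matrix. -/
def singVal {m n : Type*} [Fintype m] [Fintype n] [DecidableEq n]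
    (X : Matrix m n ℂ) (i : n) : ℝ :=
  Real.sqrt (((Matrix.posSemidef_conjTranspose_mul_self X).1).eigenvalues i)

/-- The Schatten `p`-norm, for `p ∈ [1, ∞]` encoded as `p : ℝ≥0∞`. -/
def schatten {m n : Type*} [Fintype m] [Fintype n] [DecidableEq n]
    (p : ℝ≥0∞) (X : Matrix m n ℂ) : ℝ :=
  if p = ∞ then ⨆ i, singVal X i
  else (∑ i, singVal X i ^ p.toReal) ^ (1 / p.toReal)

/-- The induced `q → p` super-operator norm. -/
def opNorm {m n : Type*} [Fintype m] [Fintype n] [DecidableEq m] [DecidableEq n]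
    (q p : ℝ≥0∞) (Φ : Matrix n n ℂ →ₗ[ℂ] Matrix m m ℂ) : ℝ :=
  ⨆ X : {X : Matrix n n ℂ // X ≠ 0}, schatten p (Φ X.1) / schatten q X.1

/-- The induced `q → p` super-operator norm restricted to Hermitian inputs. -/
def opNormH {m n : Type*} [Fintype m] [Fintype n] [DecidableEq m] [DecidableEq n]
    (q p : ℝ≥0∞) (Φ : Matrix n n ℂ →ₗ[ℂ] Matrix m m ℂ) : ℝ :=
  ⨆ X : {X : Matrix n n ℂ // X.IsHermitian ∧ X ≠ 0}, schatten p (Φ X.1) / schatten q X.1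

/-- The super-operator `Φ ⊗ I_{L(H)}`, where `H` has orthonormal basis indexed by `k`. -/
def tensorId {m n : Type*} [Fintype m] [Fintype n] (k : Type*) [Fintype k]
    (Φ : Matrix n n ℂ →ₗ[ℂ] Matrix m m ℂ) :
    Matrix (n × k) (n × k) ℂ →ₗ[ℂ] Matrix (m × k) (m × k) ℂ where
  toFun X := fun r s => Φ (fun i j => X (i, r.2) (j, s.2)) r.1 s.1
  map_add' X Y := by
    funext r s
    show Φ ((fun i j => X (i, r.2) (j, s.2)) + fun i j => Y (i, r.2) (j, s.2)) r.1 s.1 = _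
    exact congrFun (congrFun (map_add Φ (fun i j => X (i, r.2) (j, s.2) : Matrix n n ℂ) (fun i j => Y (i, r.2) (j, s.2) : Matrix n n ℂ)) r.1) s.1
  map_smul' c X := by
    funext r s
    show Φ (c • fun i j => X (i, r.2) (j, s.2)) r.1 s.1 = _
    exact congrFun (congrFun (_root_.map_smul Φ c (fun i j => X (i, r.2) (j, s.2) : Matrix n n ℂ)) r.1) s.1

/-- Complete positivity of a super-operator. -/
def IsCP {m n : Type*} [Fintype m] [Fintype n]
    (Φ : Matrix n n ℂ →ₗ[ℂ] Matrix m m ℂ) : Prop :=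
  ∀ (k : ℕ) (X : Matrix (n × Fin k) (n × Fin k) ℂ),
    X.PosSemidef → (tensorId (Fin k) Φ X).PosSemidef

/-- Trace preservation of a super-operator. -/
def IsTP {m n : Type*} [Fintype m] [Fintype n]
    (Φ : Matrix n n ℂ →ₗ[ℂ] Matrix m m ℂ) : Prop :=
  ∀ X : Matrix n n ℂ, (Φ X).trace = X.trace

/-- The rank-one operator `|u⟩⟨v|`. -/
def outer {m n : Type*} (u : m → ℂ) (v : n → ℂ) : Matrix m n ℂ :=
  Matrix.vecMulVec u (star v)

/-- The quadratic form `⟨a|X|a⟩`. -/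
def sand {n : Type*} [Fintype n] (a : n → ℂ) (X : Matrix n n ℂ) : ℂ :=
  star a ⬝ᵥ X *ᵥ a

/-- A unit vector. -/
def IsUnit' {n : Type*} [Fintype n] (u : n → ℂ) : Prop := star u ⬝ᵥ u = 1

/-!
For a `2 × 2` matrix the squared singular values `σ₀², σ₁²` have sum `‖A‖_F²` and product
`|det A|²`, so `‖A‖₁ = √(‖A‖_F² + 2 |det A|)`. The map `Φ = id − depolarizing` sends `X` to its
traceless part `X − (tr X / 2) I`; this lowers `‖·‖_F²` by exactly `|tr X|² / 2` and raises
`|det|` by at most `|tr X|² / 4`, so `‖Φ X‖_p ≤ ‖Φ X‖₁ ≤ ‖X‖₁`, with equality at `X = |0⟩⟨1|`.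
For Hermitian `X`, `Φ X` is traceless Hermitian, hence `‖Φ X‖_F² = 2 |det Φ X|`: its two singular
values coincide and `‖Φ X‖_p = 2^{1/p} ‖Φ X‖_F / √2 ≤ (2^{1/p} / 2) ‖X‖₁`, with equality at
`X = diag(1, −1)`.
-/

section SingularValues

variable {m n : Type*} [Fintype m] [Fintype n]

def frobeniusSq (A : Matrix m n ℂ) : ℝ := ∑ i, ∑ j, Complex.normSq (A i j)

lemma frobeniusSq_pos {A : Matrix m n ℂ} (hA : A ≠ 0) : 0 < frobeniusSq A := by
  obtain ⟨i, j, hij⟩ : ∃ i j, A i j ≠ 0 := by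
    by_contra! h
    exact hA (Matrix.ext h)
  have hnonneg : ∀ i j, 0 ≤ Complex.normSq (A i j) := fun _ _ => Complex.normSq_nonneg _
  calc 0 < Complex.normSq (A i j) := Complex.normSq_pos.mpr hij
    _ ≤ ∑ j, Complex.normSq (A i j) :=
        Finset.single_le_sum (fun j _ => hnonneg i j) (Finset.mem_univ j)
    _ ≤ frobeniusSq A :=
        Finset.single_le_sum (fun i _ => Finset.sum_nonneg fun j _ => hnonneg i j)
          (Finset.mem_univ i)

variable [DecidableEq n]

def singValSq (A : Matrix m n ℂ) (i : n) : ℝ :=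
  (posSemidef_conjTranspose_mul_self A).1.eigenvalues i

lemma singVal_eq_sqrt (A : Matrix m n ℂ) (i : n) : singVal A i = √(singValSq A i) := rfl

lemma singValSq_nonneg (A : Matrix m n ℂ) (i : n) : 0 ≤ singValSq A i :=
  (posSemidef_conjTranspose_mul_self A).eigenvalues_nonneg i

lemma singVal_nonneg (A : Matrix m n ℂ) (i : n) : 0 ≤ singVal A i := Real.sqrt_nonneg _

lemma sum_singValSq (A : Matrix m n ℂ) : ∑ i, singValSq A i = frobeniusSq A := by
  have h := (posSemidef_conjTranspose_mul_self A).1.trace_eq_sum_eigenvalues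
  have htrace : (Aᴴ * A).trace = (frobeniusSq A : ℂ) := by
    simp only [Matrix.trace, Matrix.diag, Matrix.mul_apply, Matrix.conjTranspose_apply,
      frobeniusSq, Complex.ofReal_sum, Complex.normSq_eq_conj_mul_self]
    exact Finset.sum_comm
  refine Complex.ofReal_injective ?_
  rw [Complex.ofReal_sum, ← htrace, h]
  rfl

lemma prod_singValSq (A : Matrix n n ℂ) : ∏ i, singValSq A i = Complex.normSq A.det := by
  have h := (posSemidef_conjTranspose_mul_self A).1.det_eq_prod_eigenvalues
  have hnormSq : star A.det * A.det = (Complex.normSq A.det : ℂ) :=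
    (Complex.normSq_eq_conj_mul_self).symm
  rw [det_mul, det_conjTranspose, hnormSq] at h
  apply Complex.ofReal_injective
  push_cast [singValSq]
  exact h.symm

end SingularValues

lemma sum_rpow_rpow_one_div_le_sum {ι : Type*} (s : Finset ι) {f : ι → ℝ} (hf : ∀ i, 0 ≤ f i)
    {p : ℝ} (hp : 1 ≤ p) : (∑ i ∈ s, f i ^ p) ^ (1 / p) ≤ ∑ i ∈ s, f i := by
  set S := ∑ i ∈ s, f i
  have hS : 0 ≤ S := Finset.sum_nonneg fun i _ => hf i
  have hpow : ∑ i ∈ s, f i ^ p ≤ S ^ p :=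
    calc ∑ i ∈ s, f i ^ p = ∑ i ∈ s, f i * f i ^ (p - 1) := by
          refine Finset.sum_congr rfl fun i _ => ?_
          rw [← Real.rpow_one_add' (hf i) (by linarith), add_sub_cancel]
      _ ≤ ∑ i ∈ s, f i * S ^ (p - 1) := by
          refine Finset.sum_le_sum fun i hi => mul_le_mul_of_nonneg_left ?_ (hf i)
          exact Real.rpow_le_rpow (hf i) (Finset.single_le_sum (fun j _ => hf j) hi)
            (by linarith)
      _ = S ^ p := by
          rw [← Finset.sum_mul, ← Real.rpow_one_add' hS (by linarith), add_sub_cancel]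
  calc (∑ i ∈ s, f i ^ p) ^ (1 / p) ≤ (S ^ p) ^ (1 / p) :=
        Real.rpow_le_rpow (Finset.sum_nonneg fun i _ => Real.rpow_nonneg (hf i) p) hpow
          (by positivity)
    _ = S := by rw [← Real.rpow_mul hS, mul_one_div_cancel (by linarith), Real.rpow_one]

section Schatten

variable {m n : Type*} [Fintype m] [Fintype n] [DecidableEq n] {p : ℝ≥0∞}

lemma schatten_one_eq_sum (A : Matrix m n ℂ) : schatten 1 A = ∑ i, singVal A i := by
  simp [schatten]

lemma singVal_le_schatten (hp : p ≠ 0) (A : Matrix m n ℂ) (i : n) :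
    singVal A i ≤ schatten p A := by
  rw [schatten]
  split_ifs with hinf
  · exact le_ciSup (Set.finite_range _).bddAbove i
  · have hpos : 0 < p.toReal := ENNReal.toReal_pos hp hinf
    calc singVal A i = (singVal A i ^ p.toReal) ^ (1 / p.toReal) := by
          rw [← Real.rpow_mul (singVal_nonneg A i), mul_one_div_cancel hpos.ne', Real.rpow_one]
      _ ≤ (∑ j, singVal A j ^ p.toReal) ^ (1 / p.toReal) := by
          refine Real.rpow_le_rpow (Real.rpow_nonneg (singVal_nonneg A i) _) ?_ (by positivity)
          exact Finset.single_le_sum (f := fun j => singVal A j ^ p.toReal)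
            (fun j _ => Real.rpow_nonneg (singVal_nonneg A j) _) (Finset.mem_univ i)

lemma schatten_le_schatten_one (hp : 1 ≤ p) (A : Matrix m n ℂ) :
    schatten p A ≤ schatten 1 A := by
  rw [schatten_one_eq_sum, schatten]
  split_ifs with hinf
  · exact Real.iSup_le
      (fun i => Finset.single_le_sum (fun j _ => singVal_nonneg A j) (Finset.mem_univ i))
      (Finset.sum_nonneg fun j _ => singVal_nonneg A j)
  · refine sum_rpow_rpow_one_div_le_sum _ (singVal_nonneg A) ?_
    simpa using ENNReal.toReal_mono hinf hp

lemma schatten_of_forall_singVal_eq [Nonempty n] (hp : p ≠ 0) {A : Matrix m n ℂ} {c : ℝ}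
    (h : ∀ i, singVal A i = c) : schatten p A = (Fintype.card n : ℝ) ^ (1 / p.toReal) * c := by
  have hc : 0 ≤ c := h (Classical.arbitrary n) ▸ singVal_nonneg A _
  rw [schatten]
  split_ifs with hinf
  · simp [h, hinf]
  · have hpos : 0 < p.toReal := ENNReal.toReal_pos hp hinf
    simp only [h, Finset.sum_const, Finset.card_univ, nsmul_eq_mul]
    rw [Real.mul_rpow (by positivity) (by positivity), ← Real.rpow_mul hc,
      mul_one_div_cancel hpos.ne', Real.rpow_one]

lemma schatten_one_pos {A : Matrix m n ℂ} (hA : A ≠ 0) : 0 < schatten 1 A := by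
  obtain ⟨i, hi⟩ : ∃ i, 0 < singValSq A i := by
    by_contra! h
    have := sum_singValSq A ▸ Finset.sum_nonpos fun i _ => h i
    exact this.not_gt (frobeniusSq_pos hA)
  calc 0 < singVal A i := Real.sqrt_pos.mpr hi
    _ ≤ schatten 1 A := singVal_le_schatten one_ne_zero A i

end Schatten

section FinTwo

variable {p : ℝ≥0∞} {A : Matrix (Fin 2) (Fin 2) ℂ}

lemma frobeniusSq_fin_two (A : Matrix (Fin 2) (Fin 2) ℂ) :
    frobeniusSq A = Complex.normSq (A 0 0) + Complex.normSq (A 0 1) + Complex.normSq (A 1 0)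
      + Complex.normSq (A 1 1) := by
  simp only [frobeniusSq, Fin.sum_univ_two]
  ring

lemma schatten_one_fin_two (A : Matrix (Fin 2) (Fin 2) ℂ) :
    schatten 1 A = √(frobeniusSq A + 2 * ‖A.det‖) := by
  have hsum := sum_singValSq A
  have hprod := prod_singValSq A
  rw [Fin.sum_univ_two] at hsum
  rw [Fin.prod_univ_two] at hprod
  have hsq : (singVal A 0 + singVal A 1) ^ 2 = frobeniusSq A + 2 * ‖A.det‖ := by
    simp only [singVal_eq_sqrt]
    rw [add_sq, Real.sq_sqrt (singValSq_nonneg A 0), Real.sq_sqrt (singValSq_nonneg A 1),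
      mul_assoc, ← Real.sqrt_mul (singValSq_nonneg A 0), hprod, ← Complex.norm_def]
    linarith
  rw [schatten_one_eq_sum, Fin.sum_univ_two, ← hsq,
    Real.sqrt_sq (add_nonneg (singVal_nonneg A 0) (singVal_nonneg A 1))]

lemma singVal_fin_two_of_frobeniusSq_eq (h : frobeniusSq A = 2 * ‖A.det‖) (i : Fin 2) :
    singVal A i = √(frobeniusSq A / 2) := by
  have hsum := sum_singValSq A
  have hprod := prod_singValSq A
  rw [Fin.sum_univ_two] at hsum
  rw [Fin.prod_univ_two, ← Complex.sq_norm] at hprod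
  have hsq : (singValSq A 0 - singValSq A 1) ^ 2 = 0 := by
    rw [show (singValSq A 0 - singValSq A 1) ^ 2
      = (singValSq A 0 + singValSq A 1) ^ 2 - 4 * (singValSq A 0 * singValSq A 1) by ring,
      hsum, hprod, h]
    ring
  have heq : singValSq A 0 = singValSq A 1 :=
    sub_eq_zero.mp (pow_eq_zero_iff two_ne_zero |>.mp hsq)
  rw [singVal_eq_sqrt]
  congr 1
  fin_cases i <;> simp <;> linarith

lemma schatten_fin_two_of_frobeniusSq_eq (hp : p ≠ 0) (h : frobeniusSq A = 2 * ‖A.det‖) :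
    schatten p A = 2 ^ (1 / p.toReal) * √(frobeniusSq A / 2) := by
  rw [schatten_of_forall_singVal_eq hp (singVal_fin_two_of_frobeniusSq_eq h), Fintype.card_fin,
    Nat.cast_ofNat]

lemma schatten_fin_two_of_det_eq_zero (hp : 1 ≤ p) (h : A.det = 0) :
    schatten p A = √(frobeniusSq A) := by
  have hsum := sum_singValSq A
  have hprod := prod_singValSq A
  rw [Fin.sum_univ_two] at hsum
  rw [Fin.prod_univ_two, h, map_zero] at hprod
  obtain ⟨i, hi⟩ : ∃ i, singValSq A i = frobeniusSq A := by
    rcases mul_eq_zero.mp hprod with h0 | h1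
    · exact ⟨1, by linarith⟩
    · exact ⟨0, by linarith⟩
  refine le_antisymm ?_ ?_
  · simpa [schatten_one_fin_two, h] using schatten_le_schatten_one hp A
  · simpa [singVal_eq_sqrt, hi] using singVal_le_schatten (zero_lt_one.trans_le hp).ne' A i

end FinTwo

section Depolarizing

variable {n : Type*} [Fintype n]

lemma isCP_id : IsCP (LinearMap.id : Matrix n n ℂ →ₗ[ℂ] Matrix n n ℂ) := fun _ _ hX => hX

lemma isTP_id : IsTP (LinearMap.id : Matrix n n ℂ →ₗ[ℂ] Matrix n n ℂ) := fun _ => rfl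

variable [DecidableEq n]

variable (n) in
def depolarizing : Matrix n n ℂ →ₗ[ℂ] Matrix n n ℂ :=
  (Fintype.card n : ℂ)⁻¹ • (traceLinearMap n ℂ ℂ).smulRight (1 : Matrix n n ℂ)

lemma depolarizing_apply (X : Matrix n n ℂ) :
    depolarizing n X = (X.trace / Fintype.card n) • (1 : Matrix n n ℂ) := by
  simp [depolarizing, div_eq_inv_mul, mul_smul]

lemma depolarizing_apply_of_trace_eq_zero {X : Matrix n n ℂ} (hX : X.trace = 0) :
    depolarizing n X = 0 := by
  simp [depolarizing_apply, hX]

lemma isTP_depolarizing [Nonempty n] : IsTP (depolarizing n) := fun X => by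
  rw [depolarizing_apply, trace_smul, trace_one, smul_eq_mul, div_mul_cancel₀]
  exact Nat.cast_ne_zero.mpr Fintype.card_ne_zero

open scoped Kronecker in
/-- The sum of diagonal blocks is the partial trace over `n`. -/
lemma tensorId_depolarizing (k : Type*) [Fintype k] (X : Matrix (n × k) (n × k) ℂ) :
    tensorId k (depolarizing n) X = (Fintype.card n : ℝ)⁻¹ •
      ((1 : Matrix n n ℂ) ⊗ₖ ∑ i, X.submatrix (fun r => (i, r)) (fun s => (i, s))) := by
  ext ⟨a, r⟩ ⟨b, s⟩
  change depolarizing n (of fun i j => X (i, r) (j, s)) a b = _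
  rw [depolarizing_apply]
  simp [trace, one_apply, Matrix.sum_apply, div_eq_inv_mul]

lemma isCP_depolarizing : IsCP (depolarizing n) := fun k X hX => by
  rw [tensorId_depolarizing]
  exact (PosSemidef.one.kronecker (posSemidef_sum _ fun i _ => hX.submatrix _)).smul
    (by positivity)

end Depolarizing

section TracelessPart

variable {p : ℝ≥0∞}

lemma sub_depolarizing_fin_two (X : Matrix (Fin 2) (Fin 2) ℂ) :
    X - depolarizing (Fin 2) X = !![(X 0 0 - X 1 1) / 2, X 0 1; X 1 0, (X 1 1 - X 0 0) / 2] := by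
  ext i j
  fin_cases i <;> fin_cases j <;> simp [depolarizing_apply, trace_fin_two] <;> ring

lemma frobeniusSq_sub_depolarizing_add_normSq_trace (X : Matrix (Fin 2) (Fin 2) ℂ) :
    frobeniusSq (X - depolarizing (Fin 2) X) + Complex.normSq X.trace / 2 = frobeniusSq X := by
  rw [sub_depolarizing_fin_two, frobeniusSq_fin_two, frobeniusSq_fin_two, trace_fin_two]
  simp only [of_apply, cons_val', cons_val_zero, cons_val_one, empty_val', cons_val_fin_one,
    map_div₀, Complex.normSq_ofNat, Complex.normSq_add, Complex.normSq_sub]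
  have hre : (X 1 1 * starRingEnd ℂ (X 0 0)).re = (X 0 0 * starRingEnd ℂ (X 1 1)).re := by
    simp only [Complex.mul_re, Complex.conj_re, Complex.conj_im]
    ring
  linarith

lemma det_sub_depolarizing (X : Matrix (Fin 2) (Fin 2) ℂ) :
    (X - depolarizing (Fin 2) X).det = X.det - (X.trace / 2) ^ 2 := by
  rw [sub_depolarizing_fin_two, det_fin_two_of, det_fin_two, trace_fin_two]
  ring

lemma schatten_one_sub_depolarizing_le (X : Matrix (Fin 2) (Fin 2) ℂ) :
    schatten 1 (X - depolarizing (Fin 2) X) ≤ schatten 1 X := by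
  rw [schatten_one_fin_two, schatten_one_fin_two]
  refine Real.sqrt_le_sqrt ?_
  have hdet : ‖(X - depolarizing (Fin 2) X).det‖ ≤ ‖X.det‖ + Complex.normSq X.trace / 4 := by
    rw [det_sub_depolarizing]
    refine (norm_sub_le _ _).trans_eq ?_
    rw [norm_pow, norm_div, Complex.norm_two, div_pow, Complex.sq_norm]
    norm_num
  linarith [frobeniusSq_sub_depolarizing_add_normSq_trace X]

lemma schatten_sub_depolarizing_le (hp : 1 ≤ p) (X : Matrix (Fin 2) (Fin 2) ℂ) :
    schatten p (X - depolarizing (Fin 2) X) ≤ schatten 1 X :=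
  (schatten_le_schatten_one hp _).trans (schatten_one_sub_depolarizing_le X)

end TracelessPart

section Hermitian

variable {p : ℝ≥0∞} {X : Matrix (Fin 2) (Fin 2) ℂ}

lemma exists_eq_of_isHermitian_fin_two (hX : X.IsHermitian) :
    ∃ (a d : ℝ) (z : ℂ), X = !![(a : ℂ), z; star z, (d : ℂ)] := by
  refine ⟨(X 0 0).re, (X 1 1).re, X 0 1, ?_⟩
  have hdiag (i : Fin 2) : ((X i i).re : ℂ) = X i i :=
    Complex.conj_eq_iff_re.mp (hX.apply i i)
  ext i j
  fin_cases i <;> fin_cases j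
  · exact (hdiag 0).symm
  · rfl
  · exact (hX.apply 1 0).symm
  · exact (hdiag 1).symm

lemma frobeniusSq_hermitian_fin_two (a d : ℝ) (z : ℂ) :
    frobeniusSq !![(a : ℂ), z; star z, (d : ℂ)] = a ^ 2 + d ^ 2 + 2 * Complex.normSq z := by
  rw [frobeniusSq_fin_two]
  simp [Complex.normSq_ofReal]
  ring

lemma det_hermitian_fin_two (a d : ℝ) (z : ℂ) :
    (!![(a : ℂ), z; star z, (d : ℂ)]).det = ((a * d - Complex.normSq z : ℝ) : ℂ) := by
  rw [det_fin_two_of, Complex.star_def, Complex.mul_conj]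
  push_cast
  ring

lemma sub_depolarizing_hermitian_fin_two (a d : ℝ) (z : ℂ) :
    !![(a : ℂ), z; star z, (d : ℂ)] - depolarizing (Fin 2) !![(a : ℂ), z; star z, (d : ℂ)]
      = !![(((a - d) / 2 : ℝ) : ℂ), z; star z, (((d - a) / 2 : ℝ) : ℂ)] := by
  rw [sub_depolarizing_fin_two]
  simp

lemma frobeniusSq_sub_depolarizing_of_isHermitian (hX : X.IsHermitian) :
    frobeniusSq (X - depolarizing (Fin 2) X) = 2 * ‖(X - depolarizing (Fin 2) X).det‖ := by
  obtain ⟨a, d, z, rfl⟩ := exists_eq_of_isHermitian_fin_two hX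
  rw [sub_depolarizing_hermitian_fin_two, frobeniusSq_hermitian_fin_two, det_hermitian_fin_two,
    Complex.norm_real, Real.norm_eq_abs, abs_of_nonpos]
  · ring
  · nlinarith [sq_nonneg (a - d), Complex.normSq_nonneg z]

lemma two_mul_frobeniusSq_sub_depolarizing_le (hX : X.IsHermitian) :
    2 * frobeniusSq (X - depolarizing (Fin 2) X) ≤ frobeniusSq X + 2 * ‖X.det‖ := by
  obtain ⟨a, d, z, rfl⟩ := exists_eq_of_isHermitian_fin_two hX
  rw [sub_depolarizing_hermitian_fin_two, frobeniusSq_hermitian_fin_two,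
    frobeniusSq_hermitian_fin_two, det_hermitian_fin_two, Complex.norm_real, Real.norm_eq_abs]
  nlinarith [neg_abs_le (a * d - Complex.normSq z)]

lemma schatten_sub_depolarizing_le_of_isHermitian (hp : p ≠ 0) (hX : X.IsHermitian) :
    schatten p (X - depolarizing (Fin 2) X) ≤ 2 ^ (1 / p.toReal) / 2 * schatten 1 X := by
  rw [schatten_fin_two_of_frobeniusSq_eq hp (frobeniusSq_sub_depolarizing_of_isHermitian hX),
    schatten_one_fin_two]
  have hsqrt : √(frobeniusSq (X - depolarizing (Fin 2) X) / 2)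
      ≤ √((frobeniusSq X + 2 * ‖X.det‖) / 2 ^ 2) :=
    Real.sqrt_le_sqrt (by linarith [two_mul_frobeniusSq_sub_depolarizing_le hX])
  rw [Real.sqrt_div' (frobeniusSq X + _) (by positivity), Real.sqrt_sq zero_le_two] at hsqrt
  calc (2 : ℝ) ^ (1 / p.toReal) * √(frobeniusSq (X - depolarizing (Fin 2) X) / 2)
      ≤ 2 ^ (1 / p.toReal) * (√(frobeniusSq X + 2 * ‖X.det‖) / 2) := by gcongr
    _ = 2 ^ (1 / p.toReal) / 2 * √(frobeniusSq X + 2 * ‖X.det‖) := by ring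

end Hermitian

section Witnesses

variable {p : ℝ≥0∞}

lemma schatten_pauliZ (hp : p ≠ 0) :
    schatten p !![(1 : ℂ), 0; 0, -1] = 2 ^ (1 / p.toReal) := by
  have hfrob : frobeniusSq !![(1 : ℂ), 0; 0, -1] = 2 := by
    rw [frobeniusSq_fin_two]
    norm_num
  have hdet : ‖(!![(1 : ℂ), 0; 0, -1]).det‖ = 1 := by simp [det_fin_two_of]
  rw [schatten_fin_two_of_frobeniusSq_eq hp (by rw [hfrob, hdet]; norm_num), hfrob]
  norm_num

lemma schatten_single_zero_one (hp : 1 ≤ p) : schatten p !![(0 : ℂ), 1; 0, 0] = 1 := by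
  have hfrob : frobeniusSq !![(0 : ℂ), 1; 0, 0] = 1 := by
    rw [frobeniusSq_fin_two]
    norm_num
  rw [schatten_fin_two_of_det_eq_zero hp (by simp [det_fin_two_of]), hfrob, Real.sqrt_one]

end Witnesses

lemma ciSup_eq_of_forall_le_of_eq {ι α : Type*} [ConditionallyCompleteLattice α] {f : ι → α}
    {c : α} (h : ∀ i, f i ≤ c) (i₀ : ι) (h₀ : f i₀ = c) : ⨆ i, f i = c :=
  have : Nonempty ι := ⟨i₀⟩
  le_antisymm (ciSup_le h) (h₀ ▸ le_ciSup ⟨c, Set.forall_mem_range.2 h⟩ i₀)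

section Norms

variable {p : ℝ≥0∞}

lemma opNormH_id_sub_depolarizing (hp : p ≠ 0) :
    opNormH 1 p (LinearMap.id - depolarizing (Fin 2)) = 2 ^ (1 / p.toReal) / 2 := by
  refine ciSup_eq_of_forall_le_of_eq (fun ⟨X, hX, hX0⟩ => ?_)
    ⟨!![1, 0; 0, -1], ?_, ?_⟩ ?_
  · rw [div_le_iff₀ (schatten_one_pos hX0)]
    exact schatten_sub_depolarizing_le_of_isHermitian hp hX
  · ext i j
    fin_cases i <;> fin_cases j <;> simp
  · intro h
    simpa using congrFun (congrFun h 0) 0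
  · dsimp only
    rw [LinearMap.sub_apply, LinearMap.id_apply,
      depolarizing_apply_of_trace_eq_zero (by simp [trace_fin_two]), sub_zero,
      schatten_pauliZ hp, schatten_pauliZ one_ne_zero]
    norm_num

lemma opNorm_id_sub_depolarizing (hp : 1 ≤ p) :
    opNorm 1 p (LinearMap.id - depolarizing (Fin 2)) = 1 := by
  refine ciSup_eq_of_forall_le_of_eq (fun ⟨X, hX0⟩ => ?_) ⟨!![0, 1; 0, 0], ?_⟩ ?_
  · rw [div_le_one (schatten_one_pos hX0)]
    exact schatten_sub_depolarizing_le hp X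
  · intro h
    simpa using congrFun (congrFun h 0) 1
  · dsimp only
    rw [LinearMap.sub_apply, LinearMap.id_apply,
      depolarizing_apply_of_trace_eq_zero (by simp [trace_fin_two]), sub_zero,
      schatten_single_zero_one hp, schatten_single_zero_one le_rfl, div_one]

end Norms

lemma two_rpow_one_div_toReal_div_two_lt_one {p : ℝ≥0∞} (hp : 1 < p) :
    (2 : ℝ) ^ (1 / p.toReal) / 2 < 1 := by
  rw [div_lt_one two_pos]
  rcases eq_or_ne p ⊤ with rfl | hfin
  · norm_num
  · have : 1 < p.toReal := by simpa using ENNReal.toReal_strict_mono hfin hp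
    calc (2 : ℝ) ^ (1 / p.toReal) < 2 ^ (1 : ℝ) :=
          Real.rpow_lt_rpow_of_exponent_lt one_lt_two ((div_lt_one (by linarith)).mpr this)
      _ = 2 := Real.rpow_one 2

/-- For every `p ∈ (1, ∞]` there are CPTP maps `Φ₀` (identity) and `Φ₁` (completely
depolarizing) with `‖Φ₀ − Φ₁‖^H_{1→p} = 2^{1/p}/2 < 1 = ‖Φ₀ − Φ₁‖_{1→p}`. -/
theorem stmt6 (p : ℝ≥0∞) (hp : 1 < p) :
    ∃ Φ₀ Φ₁ : Matrix (Fin 2) (Fin 2) ℂ →ₗ[ℂ] Matrix (Fin 2) (Fin 2) ℂ,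
      IsCP Φ₀ ∧ IsTP Φ₀ ∧ IsCP Φ₁ ∧ IsTP Φ₁ ∧
      (∀ X, Φ₀ X = X) ∧
      (∀ X, Φ₁ X = (X.trace / 2) • (1 : Matrix (Fin 2) (Fin 2) ℂ)) ∧
      opNormH 1 p (Φ₀ - Φ₁) = (2 : ℝ) ^ (1 / p.toReal) / 2 ∧
      opNorm 1 p (Φ₀ - Φ₁) = 1 ∧
      opNormH 1 p (Φ₀ - Φ₁) < opNorm 1 p (Φ₀ - Φ₁) := by
  have hNH := opNormH_id_sub_depolarizing (zero_lt_one.trans hp).ne'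
  have hN := opNorm_id_sub_depolarizing hp.le
  refine ⟨LinearMap.id, depolarizing (Fin 2), isCP_id, isTP_id, isCP_depolarizing,
    isTP_depolarizing, fun _ => rfl, fun X => by simp [depolarizing_apply], hNH, hN, ?_⟩
  rw [hNH, hN]
  exact two_rpow_one_div_toReal_div_two_lt_one hp

end SchattenNotes
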